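/- arXiv:1008.0075 — 2 statements merged into one kernel-verified Lean document; each statement's English description precedes it below -/
import Mathlib

section
/- Let g : ℝ → ℝ^d be defined by g(z) = (2πΔ)^{-d/2} · exp(-(‖z‖₂ + ρ)²/(2Δ)). If ε ∈ (0,1), ρ > 0, Δ ≥ 16 d² ρ²/ε², and R ≥ 2√(dΔ log(8d/ε)), then the integral of g over the Euclidean ball B(0,R) in ℝ^d is at least 1 - ε/2. -/
open MeasureTheory Real Set Metric Module

/-! By Young's inequality `(r + ρ)² ≤ (1 + t) r² + (1 + t⁻¹) ρ²`, the shifted Gaussian dominates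
`exp (-(1 + t⁻¹) ρ² / 2Δ)` times the centred Gaussian of variance `Δ / (1 + t)`. The latter has
total mass `(1 + t)^(-d/2)`, and a Chernoff bound puts at most a `2^d exp (-3 (1 + t) R² / 8Δ)`
fraction of it outside `B(0, R)`. For `t = ε / 4d` the two losses are at most `9ε/32` and `ε/8`. -/

theorem add_sq_le_one_add_mul_sq_add_one_add_inv_mul_sq {t : ℝ} (ht : 0 < t) (x y : ℝ) :
    (x + y) ^ 2 ≤ (1 + t) * x ^ 2 + (1 + t⁻¹) * y ^ 2 := by
  have h : 0 ≤ t⁻¹ * (t * x - y) ^ 2 := by positivity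
  have ht' : t⁻¹ * t = 1 := inv_mul_cancel₀ ht.ne'
  nlinarith

theorem exp_mul_exp_le_exp_neg_add_sq_div {Δ t : ℝ} (hΔ : 0 < Δ) (ht : 0 < t) (r ρ : ℝ) :
    rexp (-((1 + t⁻¹) * ρ ^ 2 / (2 * Δ))) * rexp (-((1 + t) / (2 * Δ)) * r ^ 2) ≤
      rexp (-(r + ρ) ^ 2 / (2 * Δ)) := by
  rw [← exp_add, exp_le_exp, show -((1 + t⁻¹) * ρ ^ 2 / (2 * Δ)) + -((1 + t) / (2 * Δ)) * r ^ 2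
    = -((1 + t) * r ^ 2 + (1 + t⁻¹) * ρ ^ 2) / (2 * Δ) by ring]
  gcongr
  exact add_sq_le_one_add_mul_sq_add_one_add_inv_mul_sq ht r ρ

section Gaussian

variable {V : Type*} [NormedAddCommGroup V] [InnerProductSpace ℝ V] [FiniteDimensional ℝ V]
  [MeasurableSpace V] [BorelSpace V]

theorem integrable_rexp_neg_mul_sq_norm {b : ℝ} (hb : 0 < b) :
    Integrable (fun v : V ↦ rexp (-b * ‖v‖ ^ 2)) :=
  Integrable.of_integral_ne_zero <| by
    rw [GaussianFourier.integral_rexp_neg_mul_sq_norm hb]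
    exact (rpow_pos_of_pos (by positivity) _).ne'

/-- On `‖v‖ > R` we have `exp (-b ‖v‖²) ≤ exp (-(b - a) R²) exp (-a ‖v‖²)`. -/
theorem setIntegral_compl_closedBall_rexp_neg_mul_sq_norm_le {a b R : ℝ} (ha : 0 < a)
    (hab : a ≤ b) (hR : 0 ≤ R) :
    ∫ v in (closedBall (0 : V) R)ᶜ, rexp (-b * ‖v‖ ^ 2) ≤
      rexp (-(b - a) * R ^ 2) * (π / a) ^ (finrank ℝ V / 2 : ℝ) := by
  have hdom : Integrable (fun v : V ↦ rexp (-(b - a) * R ^ 2) * rexp (-a * ‖v‖ ^ 2)) :=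
    (integrable_rexp_neg_mul_sq_norm ha).const_mul _
  calc ∫ v in (closedBall (0 : V) R)ᶜ, rexp (-b * ‖v‖ ^ 2)
      ≤ ∫ v in (closedBall (0 : V) R)ᶜ, rexp (-(b - a) * R ^ 2) * rexp (-a * ‖v‖ ^ 2) := by
        refine setIntegral_mono_on (integrable_rexp_neg_mul_sq_norm (ha.trans_le hab)).integrableOn
          hdom.integrableOn isClosed_closedBall.measurableSet.compl fun v hv ↦ ?_
        rw [mem_compl_iff, mem_closedBall_zero_iff, not_le] at hv
        have hRv : R ^ 2 ≤ ‖v‖ ^ 2 := pow_le_pow_left₀ hR hv.le 2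
        rw [← exp_add, exp_le_exp]
        nlinarith
    _ ≤ ∫ v : V, rexp (-(b - a) * R ^ 2) * rexp (-a * ‖v‖ ^ 2) :=
        setIntegral_le_integral hdom (.of_forall fun _ ↦ by positivity)
    _ = rexp (-(b - a) * R ^ 2) * (π / a) ^ (finrank ℝ V / 2 : ℝ) := by
        rw [integral_const_mul, GaussianFourier.integral_rexp_neg_mul_sq_norm ha]

theorem setIntegral_closedBall_rexp_neg_mul_sq_norm_ge {b R : ℝ} (hb : 0 < b) (hR : 0 ≤ R) :
    (π / b) ^ (finrank ℝ V / 2 : ℝ) * (1 - 2 ^ finrank ℝ V * rexp (-(3 / 4) * b * R ^ 2)) ≤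
      ∫ v in closedBall (0 : V) R, rexp (-b * ‖v‖ ^ 2) := by
  have hsplit := integral_add_compl (isClosed_closedBall (x := (0 : V)) (ε := R)).measurableSet
    (integrable_rexp_neg_mul_sq_norm hb)
  rw [GaussianFourier.integral_rexp_neg_mul_sq_norm hb] at hsplit
  have htail := setIntegral_compl_closedBall_rexp_neg_mul_sq_norm_le (V := V) (b := b)
    (by positivity : 0 < b / 4) (by linarith) hR
  have hscale : (π / (b / 4)) ^ (finrank ℝ V / 2 : ℝ) =
      2 ^ finrank ℝ V * (π / b) ^ (finrank ℝ V / 2 : ℝ) := by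
    rw [show π / (b / 4) = 2 ^ (2 : ℝ) * (π / b) by ring_nf,
      mul_rpow (by positivity) (by positivity), ← rpow_mul (by norm_num), ← rpow_natCast]
    ring_nf
  rw [hscale, show -(b - b / 4) = -(3 / 4) * b by ring] at htail
  linarith

theorem le_setIntegral_closedBall_shifted_gaussian {ρ Δ t R : ℝ} (hΔ : 0 < Δ) (ht : 0 < t)
    (hR : 0 ≤ R) :
    rexp (-((1 + t⁻¹) * ρ ^ 2 / (2 * Δ))) * (1 + t) ^ (-(finrank ℝ V : ℝ) / 2) *
        (1 - 2 ^ finrank ℝ V * rexp (-(3 / 4) * ((1 + t) / (2 * Δ)) * R ^ 2)) ≤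
      ∫ z in closedBall (0 : V) R,
        (2 * π * Δ) ^ (-(finrank ℝ V : ℝ) / 2) * rexp (-(‖z‖ + ρ) ^ 2 / (2 * Δ)) := by
  set n : ℝ := (finrank ℝ V : ℝ)
  set b := (1 + t) / (2 * Δ) with hb
  set c := (2 * π * Δ) ^ (-n / 2)
  set K := rexp (-((1 + t⁻¹) * ρ ^ 2 / (2 * Δ)))
  have hc : c * (π / b) ^ (n / 2) = (1 + t) ^ (-n / 2) := by
    rw [show π / b = 2 * π * Δ / (1 + t) by rw [hb]; field_simp,
      div_rpow (by positivity) (by positivity), mul_div, ← rpow_add (by positivity),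
      show -n / 2 + n / 2 = 0 by ring, rpow_zero, one_div, ← rpow_neg (by positivity), neg_div]
  calc K * (1 + t) ^ (-n / 2) * (1 - 2 ^ finrank ℝ V * rexp (-(3 / 4) * b * R ^ 2))
      = c * K * ((π / b) ^ (n / 2) * (1 - 2 ^ finrank ℝ V * rexp (-(3 / 4) * b * R ^ 2))) := by
        rw [← hc]; ring
    _ ≤ c * K * ∫ z in closedBall (0 : V) R, rexp (-b * ‖z‖ ^ 2) := by
        gcongr
        exact setIntegral_closedBall_rexp_neg_mul_sq_norm_ge (by positivity) hR
    _ = ∫ z in closedBall (0 : V) R, c * (K * rexp (-b * ‖z‖ ^ 2)) := by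
        rw [integral_const_mul, integral_const_mul, mul_assoc]
    _ ≤ ∫ z in closedBall (0 : V) R, c * rexp (-(‖z‖ + ρ) ^ 2 / (2 * Δ)) := by
        have hcont : Continuous fun z : V ↦ c * rexp (-(‖z‖ + ρ) ^ 2 / (2 * Δ)) := by fun_prop
        refine setIntegral_mono_on (((integrable_rexp_neg_mul_sq_norm (by positivity)).const_mul
          K).const_mul c).integrableOn
          (hcont.continuousOn.integrableOn_compact (isCompact_closedBall _ _))
          isClosed_closedBall.measurableSet fun z _ ↦ ?_
        gcongr
        exact exp_mul_exp_le_exp_neg_add_sq_div hΔ ht ‖z‖ ρ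

end Gaussian

theorem one_sub_add_mul_le_exp_neg_mul_one_add_rpow_neg {s t : ℝ} (hs : 0 ≤ s) (ht : -1 < t)
    (x : ℝ) : 1 - (x + s * t) ≤ rexp (-x) * (1 + t) ^ (-s) := by
  have hlog : log (1 + t) ≤ t := by linarith [log_le_sub_one_of_pos (by linarith : 0 < 1 + t)]
  calc 1 - (x + s * t) ≤ rexp (-(x + s * t)) := by linarith [add_one_le_exp (-(x + s * t))]
    _ ≤ rexp (-x + log (1 + t) * -s) := by gcongr; nlinarith
    _ = rexp (-x) * (1 + t) ^ (-s) := by rw [exp_add, rpow_def_of_pos (by linarith)]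

theorem one_add_inv_mul_sq_div_add_le {d : ℕ} (hd : 0 < d) {ε ρ Δ : ℝ} (hε : ε ∈ Ioo (0 : ℝ) 1)
    (hΔ0 : 0 < Δ) (hΔ : 16 * (d : ℝ) ^ 2 * ρ ^ 2 ≤ ε ^ 2 * Δ) :
    (1 + (ε / (4 * d))⁻¹) * ρ ^ 2 / (2 * Δ) + d / 2 * (ε / (4 * d)) ≤ 9 * ε / 32 := by
  obtain ⟨hε0, hε1⟩ := hε
  have hd1 : (1 : ℝ) ≤ d := by exact_mod_cast hd
  rw [inv_div, div_add' _ _ _ (by positivity), div_le_div_iff₀ (by positivity) (by norm_num)]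
  field_simp
  have hεd : ε * ρ ^ 2 ≤ d ^ 2 * ρ ^ 2 := by gcongr; nlinarith
  have hdd : d * ρ ^ 2 ≤ d ^ 2 * ρ ^ 2 := by gcongr; nlinarith
  nlinarith

theorem two_pow_mul_exp_le {d : ℕ} (hd : 0 < d) {ε Δ t R : ℝ} (hε : ε ∈ Ioo (0 : ℝ) 1)
    (hΔ0 : 0 < Δ) (ht : 0 ≤ t) (hR : 2 * √((d : ℝ) * Δ * log (8 * d / ε)) ≤ R) :
    2 ^ d * rexp (-(3 / 4) * ((1 + t) / (2 * Δ)) * R ^ 2) ≤ ε / 8 := by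
  obtain ⟨hε0, hε1⟩ := hε
  have hd1 : (1 : ℝ) ≤ d := by exact_mod_cast hd
  set L := log (8 * d / ε)
  have hL : 3 * log 2 ≤ L := by
    rw [← log_rpow (by norm_num)]
    exact log_le_log (by norm_num) (by rw [le_div_iff₀ hε0]; norm_num; nlinarith)
  have hlog2 : 0 < log 2 := log_pos (by norm_num)
  have hL0 : 0 < L := by linarith
  have hR2 : 4 * (d * Δ * L) ≤ R ^ 2 := by
    have := sq_sqrt (by positivity : 0 ≤ (d : ℝ) * Δ * L)
    nlinarith [sqrt_nonneg ((d : ℝ) * Δ * L)]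
  have hexp : (3 / 2) * (d * L) ≤ (3 / 4) * ((1 + t) / (2 * Δ)) * R ^ 2 := by
    rw [show (3 / 4) * ((1 + t) / (2 * Δ)) * R ^ 2 = 3 * (1 + t) * R ^ 2 / (8 * Δ) by ring,
      le_div_iff₀ (by positivity)]
    nlinarith
  calc 2 ^ d * rexp (-(3 / 4) * ((1 + t) / (2 * Δ)) * R ^ 2)
      = rexp (d * log 2 + -(3 / 4) * ((1 + t) / (2 * Δ)) * R ^ 2) := by
        rw [exp_add, ← log_pow, exp_log (by positivity)]
    _ ≤ rexp (-L) := exp_le_exp.mpr (by nlinarith)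
    _ = ε / (8 * d) := by rw [exp_neg, exp_log (by positivity), inv_div]
    _ ≤ ε / 8 := div_le_div_of_nonneg_left hε0.le (by norm_num) (by linarith)

/-- If `ε ∈ (0,1)`, `ρ > 0`, `Δ ≥ 16 d² ρ²/ε²` and `R ≥ 2√(dΔ log(8d/ε))`, then the
function `g(z) = (2πΔ)^{-d/2} exp(-(‖z‖₂+ρ)²/(2Δ))` has integral at least `1 - ε/2`
over the Euclidean ball `B(0,R)` in `ℝ^d`. -/
theorem gaussian_shifted_ball_integral {d : ℕ} (hd : 0 < d) (ε ρ Δ R : ℝ)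
    (hε : ε ∈ Ioo (0 : ℝ) 1) (hρ : 0 < ρ)
    (hΔ : 16 * (d : ℝ) ^ 2 * ρ ^ 2 / ε ^ 2 ≤ Δ)
    (hR : 2 * Real.sqrt ((d : ℝ) * Δ * Real.log (8 * d / ε)) ≤ R) :
    1 - ε / 2 ≤ ∫ z in Metric.closedBall (0 : EuclideanSpace ℝ (Fin d)) R,
      (2 * π * Δ) ^ (-(d : ℝ) / 2) * Real.exp (-(‖z‖ + ρ) ^ 2 / (2 * Δ)) := by
  have hε0 : 0 < ε := hε.1
  have hΔ0 : 0 < Δ := lt_of_lt_of_le (by positivity) hΔ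
  rw [div_le_iff₀ (by positivity), mul_comm Δ] at hΔ
  set t := ε / (4 * d)
  have ht : 0 < t := by positivity
  have hball := le_setIntegral_closedBall_shifted_gaussian (V := EuclideanSpace ℝ (Fin d))
    (ρ := ρ) hΔ0 ht ((by positivity : (0 : ℝ) ≤ _).trans hR)
  rw [finrank_euclideanSpace_fin] at hball
  have hfront : 1 - 9 * ε / 32 ≤
      rexp (-((1 + t⁻¹) * ρ ^ 2 / (2 * Δ))) * (1 + t) ^ (-(d : ℝ) / 2) := by
    rw [neg_div]
    refine le_trans ?_ (one_sub_add_mul_le_exp_neg_mul_one_add_rpow_neg (by positivity)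
      (by linarith) _)
    linarith [one_add_inv_mul_sq_div_add_le hd hε hΔ0 hΔ]
  have htail := two_pow_mul_exp_le hd hε hΔ0 ht.le hR
  calc 1 - ε / 2 ≤ (1 - 9 * ε / 32) * (1 - ε / 8) := by nlinarith [hε.2]
    _ ≤ _ := mul_le_mul hfront (by linarith) (by linarith [hε.2]) (by positivity)
    _ ≤ _ := hball
end

section
/- Let X be the sum of n i.i.d. Bernoulli random variables with mean p, and let a > 0. Then P(X ≥ np + a) ≤ exp(a - (pn + a) log(1 + a/(pn))). -/
/-!
A `{0,1}`-valued variable with mean `q` has `E[exp (t X)] = 1 + q (exp t - 1) ≤ exp (q (exp t - 1))`,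
so by independence the moment generating function of the sum `S` of such variables is dominated
by that of a Poisson variable of mean `m = ∑ q`. Markov's inequality for `exp (t S)` at the
optimal `t = log (1 + a / m)` then gives the bound.
-/

open MeasureTheory ProbabilityTheory Real

section

variable {Ω : Type*}

theorem exp_mul_natCast_eq_indicator {Y : Ω → ℕ} (hY : ∀ ω, Y ω ≤ 1) (t : ℝ) :
    (fun ω => exp (t * Y ω)) = fun ω => {ω | Y ω = 1}.indicator (fun _ => exp t - 1) ω + 1 := by
  funext ω
  rcases Nat.le_one_iff_eq_zero_or_eq_one.mp (hY ω) with h | h <;> simp [h]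

variable [MeasurableSpace Ω] {P : Measure Ω}

theorem measure_ge_le_of_mgf_le_poisson [IsFiniteMeasure P] {S : Ω → ℝ} {m a : ℝ}
    (hm : 0 ≤ m) (ha : 0 ≤ a)
    (hint : ∀ t, 0 ≤ t → Integrable (fun ω => exp (t * S ω)) P)
    (hmgf : ∀ t, 0 ≤ t → mgf S P t ≤ exp (m * (exp t - 1))) :
    P.real {ω | m + a ≤ S ω} ≤ exp (a - (m + a) * log (1 + a / m)) := by
  set t := log (1 + a / m)
  have ht : 0 ≤ t := log_nonneg (by simp only [le_add_iff_nonneg_right]; positivity)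
  have hexp_t : m * (exp t - 1) ≤ a := by
    rw [exp_log (by positivity), add_sub_cancel_left]
    -- at `m = 0` the junk value `a / 0 = 0` makes `t = 0`
    rcases hm.eq_or_lt with rfl | hm
    · simpa using ha
    · rw [mul_div_cancel₀ _ hm.ne']
  calc P.real {ω | m + a ≤ S ω}
      ≤ exp (-t * (m + a)) * mgf S P t := measure_ge_le_exp_mul_mgf _ ht (hint t ht)
    _ ≤ exp (-t * (m + a)) * exp (m * (exp t - 1)) := by gcongr; exact hmgf t ht
    _ = exp (m * (exp t - 1) - (m + a) * t) := by rw [← exp_add]; ring_nf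
    _ ≤ exp (a - (m + a) * t) := by gcongr

variable [IsProbabilityMeasure P]

section IndicatorVariable

variable {Y : Ω → ℕ}

theorem integrable_exp_mul_natCast_of_le_one (hYm : Measurable Y) (hY : ∀ ω, Y ω ≤ 1) (t : ℝ) :
    Integrable (fun ω => exp (t * Y ω)) P := by
  rw [exp_mul_natCast_eq_indicator hY]
  exact ((integrable_const _).indicator (hYm (measurableSet_singleton 1))).add (integrable_const 1)

theorem mgf_natCast_of_le_one (hYm : Measurable Y) (hY : ∀ ω, Y ω ≤ 1) (t : ℝ) :
    mgf (fun ω => (Y ω : ℝ)) P t = 1 + P.real {ω | Y ω = 1} * (exp t - 1) := by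
  have hA : MeasurableSet {ω | Y ω = 1} := hYm (measurableSet_singleton 1)
  rw [mgf, exp_mul_natCast_eq_indicator hY,
    integral_add ((integrable_const _).indicator hA) (integrable_const 1),
    integral_indicator_const _ hA, integral_const, probReal_univ, smul_eq_mul, smul_eq_mul,
    mul_one, add_comm]

theorem mgf_natCast_le_of_le_one (hYm : Measurable Y) (hY : ∀ ω, Y ω ≤ 1) (t : ℝ) :
    mgf (fun ω => (Y ω : ℝ)) P t ≤ exp (P.real {ω | Y ω = 1} * (exp t - 1)) := by
  rw [mgf_natCast_of_le_one hYm hY, add_comm]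
  exact add_one_le_exp _

end IndicatorVariable

theorem measure_sum_ge_le_of_iIndepFun_of_le_one {ι : Type*} [Fintype ι]
    {Y : ι → Ω → ℕ} (hYm : ∀ i, Measurable (Y i)) (hY : ∀ i ω, Y i ω ≤ 1)
    (hind : iIndepFun Y P) {m a : ℝ} (hm : ∑ i, P.real {ω | Y i ω = 1} = m) (ha : 0 ≤ a) :
    P.real {ω | m + a ≤ ∑ i, (Y i ω : ℝ)} ≤ exp (a - (m + a) * log (1 + a / m)) := by
  set X : ι → Ω → ℝ := fun i ω => (Y i ω : ℝ)
  have hXm : ∀ i, Measurable (X i) := fun i => measurable_from_top.comp (hYm i)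
  have hXind : iIndepFun X P := hind.comp (fun _ k => (k : ℝ)) fun _ => measurable_from_top
  have hset : {ω | m + a ≤ ∑ i, (Y i ω : ℝ)} = {ω | m + a ≤ (∑ i, X i) ω} := by
    simp [X, Finset.sum_apply]
  rw [hset]
  refine measure_ge_le_of_mgf_le_poisson (hm ▸ by positivity) ha
    (fun t _ => hXind.integrable_exp_mul_sum hXm
      fun i _ => integrable_exp_mul_natCast_of_le_one (hYm i) (hY i) t)
    fun t _ => ?_
  rw [hXind.mgf_sum hXm, ← hm, Finset.sum_mul, exp_sum]
  exact Finset.prod_le_prod (fun i _ => (mgf_pos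
    (integrable_exp_mul_natCast_of_le_one (hYm i) (hY i) t)).le)
    fun i _ => mgf_natCast_le_of_le_one (hYm i) (hY i) t

end

theorem binomial_chernoff_general {Ω : Type*} [MeasurableSpace Ω] (P : Measure Ω)
    [IsProbabilityMeasure P] (n : ℕ) (p : ℝ) (hp0 : 0 < p)
    (I : Fin n → Ω → ℕ)
    (hmeas : ∀ i, Measurable (I i))
    (hval : ∀ i ω, I i ω ≤ 1)
    (hind : iIndepFun I P)
    (hid : ∀ i, P {ω | I i ω = 1} = ENNReal.ofReal p)
    (a : ℝ) (ha : 0 < a) :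
    P {ω | (n : ℝ) * p + a ≤ ∑ i, (I i ω : ℝ)}
      ≤ ENNReal.ofReal (Real.exp (a - (p * n + a) * Real.log (1 + a / (p * n)))) := by
  have hmean : ∑ i, P.real {ω | I i ω = 1} = p * n := by
    simp [measureReal_def, hid, hp0.le, mul_comm]
  rw [← ofReal_measureReal, mul_comm]
  exact ENNReal.ofReal_le_ofReal
    (measure_sum_ge_le_of_iIndepFun_of_le_one hmeas hval hind hmean ha.le)

/-- Chernoff bound for the binomial distribution (Alon–Spencer, Corollary A.1.10):
if `X` is the sum of `n` i.i.d. Bernoulli random variables with mean `p` and `a > 0`, then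
`P(X ≥ np + a) ≤ exp(a - (pn + a) log(1 + a/(pn)))`. -/
theorem binomial_chernoff {Ω : Type*} [MeasurableSpace Ω] (P : Measure Ω)
    [IsProbabilityMeasure P] (n : ℕ) (p : ℝ) (hp0 : 0 < p) (hp1 : p ≤ 1)
    (I : Fin n → Ω → ℕ)
    (hmeas : ∀ i, Measurable (I i))
    (hval : ∀ i ω, I i ω ≤ 1)
    (hind : iIndepFun I P)
    (hid : ∀ i, P {ω | I i ω = 1} = ENNReal.ofReal p)
    (a : ℝ) (ha : 0 < a) :
    P {ω | (n : ℝ) * p + a ≤ ∑ i, (I i ω : ℝ)}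
      ≤ ENNReal.ofReal (Real.exp (a - (p * n + a) * Real.log (1 + a / (p * n)))) :=
  binomial_chernoff_general P n p hp0 I hmeas hval hind hid a ha
end
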